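/- arXiv:2602.20368 — 6 statements merged into one kernel-verified Lean document; each statement's English description precedes it below -/
import Mathlib

section
/- Let h(z) = z + Σ_{n≥2} a_n z^n and g(z) = Σ_{n≥1} b_n z^n be formal power series with complex coefficients. If Σ_{n≥2} n|a_n| + Σ_{n≥1} n|b_n| ≤ 1 and Σ_{n≥1} n|b_n| < 1, then for any z1 ≠ z2 in the open unit disk U, |Σ_{n≥1} b_n(z1^n − z2^n)| < |z1 − z2 + Σ_{n≥2} a_n(z1^n − z2^n)|; in particular the harmonic map f = h + conj(g) is injective on U. -/
lemma key1 (z1 z2 : ℂ) (h1 : ‖z1‖ ≤ 1) (h2 : ‖z2‖ ≤ 1) :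
    ∀ m : ℕ, ‖z1 ^ m - z2 ^ m‖ ≤ m * ‖z1 - z2‖ := by
  intro m
  induction m with
  | zero => simp
  | succ k ih =>
    have hre : z1 ^ (k+1) - z2 ^ (k+1) = z1 * (z1 ^ k - z2 ^ k) + (z1 - z2) * z2 ^ k := by
      ring
    calc ‖z1 ^ (k+1) - z2 ^ (k+1)‖
        ≤ ‖z1 * (z1 ^ k - z2 ^ k)‖ + ‖(z1 - z2) * z2 ^ k‖ := by rw [hre]; exact norm_add_le _ _
      _ = ‖z1‖ * ‖z1 ^ k - z2 ^ k‖ + ‖z1 - z2‖ * ‖z2‖ ^ k := by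
          rw [norm_mul, norm_mul, norm_pow]
      _ ≤ (k : ℝ) * ‖z1 - z2‖ + ‖z1 - z2‖ * 1 := by
          have hp : ‖z2‖ ^ k ≤ 1 := pow_le_one₀ (norm_nonneg _) h2
          have h0 : (0:ℝ) ≤ ‖z1 - z2‖ := norm_nonneg _
          have h0' : (0:ℝ) ≤ ‖z1 ^ k - z2 ^ k‖ := norm_nonneg _
          nlinarith [norm_nonneg z1]
      _ ≤ (k + 1 : ℕ) * ‖z1 - z2‖ := by push_cast; nlinarith [norm_nonneg (z1 - z2)]

lemma key2 (z1 z2 : ℂ) (h1 : ‖z1‖ < 1) (h2 : ‖z2‖ < 1) (hne : z1 ≠ z2) (k : ℕ) :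
    ‖z1 ^ (k + 2) - z2 ^ (k + 2)‖ < (k + 2 : ℝ) * ‖z1 - z2‖ := by
  have hd : 0 < ‖z1 - z2‖ := by simpa using sub_ne_zero.mpr hne
  have hre : z1 ^ (k+2) - z2 ^ (k+2) = z1 * (z1 ^ (k+1) - z2 ^ (k+1)) + (z1 - z2) * z2 ^ (k+1) := by
    ring
  have hA : ‖z1 ^ (k+1) - z2 ^ (k+1)‖ ≤ (k+1 : ℕ) * ‖z1 - z2‖ :=
    key1 z1 z2 h1.le h2.le (k+1)
  have hp : ‖z2‖ ^ (k+1) ≤ 1 := pow_le_one₀ (norm_nonneg _) h2.le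
  calc ‖z1 ^ (k+2) - z2 ^ (k+2)‖
      ≤ ‖z1‖ * ‖z1 ^ (k+1) - z2 ^ (k+1)‖ + ‖z1 - z2‖ * ‖z2‖ ^ (k+1) := by
        rw [hre]
        calc _ ≤ ‖z1 * (z1 ^ (k+1) - z2 ^ (k+1))‖ + ‖(z1 - z2) * z2 ^ (k+1)‖ := norm_add_le _ _
          _ = _ := by rw [norm_mul, norm_mul, norm_pow]
    _ < (k + 2 : ℝ) * ‖z1 - z2‖ := by
        push_cast at hA
        have h5 : ‖z1‖ * ‖z1 ^ (k+1) - z2 ^ (k+1)‖ ≤ ‖z1‖ * (((k:ℝ)+1) * ‖z1 - z2‖) :=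
          mul_le_mul_of_nonneg_left hA (norm_nonneg z1)
        have h6 : ‖z1‖ * (((k:ℝ)+1) * ‖z1 - z2‖) < 1 * (((k:ℝ)+1) * ‖z1 - z2‖) :=
          mul_lt_mul_of_pos_right h1 (by positivity)
        have h7 : ‖z1 - z2‖ * ‖z2‖ ^ (k+1) ≤ ‖z1 - z2‖ * 1 :=
          mul_le_mul_of_nonneg_left hp hd.le
        linarith

/-- If `Σ_{n≥2} n|a_n| + Σ_{n≥1} n|b_n| ≤ 1` with the `b`-sum strictly less than `1`,
then for `z1 ≠ z2` in the unit disk, `|Σ b_n (z1^n − z2^n)| < |z1 − z2 + Σ_{n≥2} a_n (z1^n − z2^n)|`;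
in particular `f = h + conj g` is injective on the unit disk. -/
theorem stmt0 (a b : ℕ → ℂ)
    (hsa : Summable (fun n : ℕ => ((n + 2 : ℝ)) * ‖a (n + 2)‖))
    (hsb : Summable (fun n : ℕ => ((n + 1 : ℝ)) * ‖b (n + 1)‖))
    (hab : (∑' n : ℕ, ((n + 2 : ℝ)) * ‖a (n + 2)‖) +
           (∑' n : ℕ, ((n + 1 : ℝ)) * ‖b (n + 1)‖) ≤ 1)
    (hb : (∑' n : ℕ, ((n + 1 : ℝ)) * ‖b (n + 1)‖) < 1) :
    (∀ z1 z2 : ℂ, ‖z1‖ < 1 → ‖z2‖ < 1 → z1 ≠ z2 →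
      ‖∑' n : ℕ, b (n + 1) * (z1 ^ (n + 1) - z2 ^ (n + 1))‖ <
        ‖(z1 - z2) + ∑' n : ℕ, a (n + 2) * (z1 ^ (n + 2) - z2 ^ (n + 2))‖) ∧
    Set.InjOn (fun z : ℂ =>
        (z + ∑' n : ℕ, a (n + 2) * z ^ (n + 2)) +
          (starRingEnd ℂ) (∑' n : ℕ, b (n + 1) * z ^ (n + 1)))
      {z : ℂ | ‖z‖ < 1} := by
  set A := ∑' n : ℕ, ((n + 2 : ℝ)) * ‖a (n + 2)‖ with hA
  set B := ∑' n : ℕ, ((n + 1 : ℝ)) * ‖b (n + 1)‖ with hB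
  have hAnn : 0 ≤ A := tsum_nonneg fun n => by positivity
  have hBnn : 0 ≤ B := tsum_nonneg fun n => by positivity
  have key : ∀ z1 z2 : ℂ, ‖z1‖ < 1 → ‖z2‖ < 1 → z1 ≠ z2 →
      ‖∑' n : ℕ, b (n + 1) * (z1 ^ (n + 1) - z2 ^ (n + 1))‖ <
        ‖(z1 - z2) + ∑' n : ℕ, a (n + 2) * (z1 ^ (n + 2) - z2 ^ (n + 2))‖ := by
    intro z1 z2 hz1 hz2 hne
    set d := ‖z1 - z2‖ with hdd
    have hd : 0 < d := by simpa [hdd] using sub_ne_zero.mpr hne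
    have hble : ∀ n : ℕ, ‖b (n+1) * (z1 ^ (n+1) - z2 ^ (n+1))‖ ≤ ((n + 1 : ℝ) * ‖b (n+1)‖) * d := by
      intro n
      rw [norm_mul]
      have := key1 z1 z2 hz1.le hz2.le (n+1)
      push_cast at this
      nlinarith [norm_nonneg (b (n+1))]
    have hale : ∀ n : ℕ, ‖a (n+2)‖ * ‖z1 ^ (n+2) - z2 ^ (n+2)‖ ≤ ((n + 2 : ℝ) * ‖a (n+2)‖) * d := by
      intro n
      have := key1 z1 z2 hz1.le hz2.le (n+2)
      push_cast at this
      nlinarith [norm_nonneg (a (n+2))]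
    have hsb' : Summable (fun n : ℕ => ‖b (n+1) * (z1 ^ (n+1) - z2 ^ (n+1))‖) :=
      (hsb.mul_right d).of_nonneg_of_le (fun n => norm_nonneg _) hble
    have hsa' : Summable (fun n : ℕ => ‖a (n+2)‖ * ‖z1 ^ (n+2) - z2 ^ (n+2)‖) :=
      (hsa.mul_right d).of_nonneg_of_le (fun n => by positivity) hale
    have h1 : ‖∑' n : ℕ, b (n + 1) * (z1 ^ (n + 1) - z2 ^ (n + 1))‖ ≤ B * d := by
      calc ‖∑' n : ℕ, b (n + 1) * (z1 ^ (n + 1) - z2 ^ (n + 1))‖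
          ≤ ∑' n : ℕ, ‖b (n + 1) * (z1 ^ (n + 1) - z2 ^ (n + 1))‖ := norm_tsum_le_tsum_norm hsb'
        _ ≤ ∑' n : ℕ, ((n + 1 : ℝ) * ‖b (n+1)‖) * d := Summable.tsum_le_tsum hble hsb' (hsb.mul_right d)
        _ = B * d := by rw [hB, tsum_mul_right]
    have h3 : d - (∑' n : ℕ, ‖a (n+2)‖ * ‖z1 ^ (n+2) - z2 ^ (n+2)‖) ≤
        ‖(z1 - z2) + ∑' n : ℕ, a (n + 2) * (z1 ^ (n + 2) - z2 ^ (n + 2))‖ := by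
      have hn : ‖∑' n : ℕ, a (n + 2) * (z1 ^ (n + 2) - z2 ^ (n + 2))‖ ≤
          ∑' n : ℕ, ‖a (n+2)‖ * ‖z1 ^ (n+2) - z2 ^ (n+2)‖ := by
        calc ‖∑' n : ℕ, a (n + 2) * (z1 ^ (n + 2) - z2 ^ (n + 2))‖
            ≤ ∑' n : ℕ, ‖a (n + 2) * (z1 ^ (n + 2) - z2 ^ (n + 2))‖ :=
              norm_tsum_le_tsum_norm (by simpa [norm_mul] using hsa')
          _ = _ := by simp [norm_mul]
      have htri : d ≤ ‖(z1 - z2) + ∑' n : ℕ, a (n + 2) * (z1 ^ (n + 2) - z2 ^ (n + 2))‖ +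
          ‖∑' n : ℕ, a (n + 2) * (z1 ^ (n + 2) - z2 ^ (n + 2))‖ := by
        have := norm_add_le ((z1 - z2) + ∑' n : ℕ, a (n + 2) * (z1 ^ (n + 2) - z2 ^ (n + 2)))
          (-(∑' n : ℕ, a (n + 2) * (z1 ^ (n + 2) - z2 ^ (n + 2))))
        simpa [hdd] using this
      linarith
    -- main estimate: sum of a-norms + B*d < d
    have h2 : (∑' n : ℕ, ‖a (n+2)‖ * ‖z1 ^ (n+2) - z2 ^ (n+2)‖) + B * d < d := by
      have hAle : (∑' n : ℕ, ‖a (n+2)‖ * ‖z1 ^ (n+2) - z2 ^ (n+2)‖) ≤ A * d := by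
        calc _ ≤ ∑' n : ℕ, ((n + 2 : ℝ) * ‖a (n+2)‖) * d := Summable.tsum_le_tsum hale hsa' (hsa.mul_right d)
          _ = A * d := by rw [hA, tsum_mul_right]
      rcases lt_or_eq_of_le hab with hlt | heq
      · nlinarith
      · -- A + B = 1, so A = 1 - B > 0
        have hApos : 0 < A := by linarith
        have hex : ∃ n : ℕ, 0 < (n + 2 : ℝ) * ‖a (n + 2)‖ := by
          by_contra hc
          push_neg at hc
          have : ∀ n : ℕ, ((n + 2 : ℝ)) * ‖a (n + 2)‖ = 0 := fun n =>
            le_antisymm (hc n) (by positivity)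
          have hz : (fun n : ℕ => ((n + 2 : ℝ)) * ‖a (n + 2)‖) = fun _ => (0:ℝ) := funext this
          have : A = 0 := by rw [hA, hz, tsum_zero]
          linarith
        obtain ⟨n0, hn0⟩ := hex
        have ha0 : 0 < ‖a (n0 + 2)‖ := by
          by_contra hc
          push_neg at hc
          have : ‖a (n0+2)‖ = 0 := le_antisymm hc (norm_nonneg _)
          rw [this] at hn0; simp at hn0
        have hAlt : (∑' n : ℕ, ‖a (n+2)‖ * ‖z1 ^ (n+2) - z2 ^ (n+2)‖) < A * d := by
          have : (∑' n : ℕ, ‖a (n+2)‖ * ‖z1 ^ (n+2) - z2 ^ (n+2)‖) <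
              ∑' n : ℕ, ((n + 2 : ℝ) * ‖a (n+2)‖) * d := by
            refine Summable.tsum_lt_tsum (i := n0) hale ?_ hsa' (hsa.mul_right d)
            have := key2 z1 z2 hz1 hz2 hne n0
            calc ‖a (n0+2)‖ * ‖z1 ^ (n0+2) - z2 ^ (n0+2)‖
                < ‖a (n0+2)‖ * ((n0 + 2 : ℝ) * d) := by
                  exact mul_lt_mul_of_pos_left this ha0
              _ = ((n0 + 2 : ℝ) * ‖a (n0+2)‖) * d := by ring
          rw [hA, ← tsum_mul_right]
          exact this
        nlinarith
    linarith
  refine ⟨key, ?_⟩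
  intro z1 hz1 z2 hz2 heq
  by_contra hne
  simp only [Set.mem_setOf_eq] at hz1 hz2
  have hkey := key z1 z2 hz1 hz2 hne
  -- summability of the individual series
  have hsaz : ∀ z : ℂ, ‖z‖ < 1 → Summable (fun n : ℕ => a (n + 2) * z ^ (n + 2)) := by
    intro z hz
    refine Summable.of_norm (Summable.of_nonneg_of_le (fun n => norm_nonneg _) (fun n => ?_) hsa)
    rw [norm_mul, norm_pow]
    have hp : ‖z‖ ^ (n+2) ≤ 1 := pow_le_one₀ (norm_nonneg _) hz.le
    nlinarith [norm_nonneg (a (n+2))]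
  have hsbz : ∀ z : ℂ, ‖z‖ < 1 → Summable (fun n : ℕ => b (n + 1) * z ^ (n + 1)) := by
    intro z hz
    refine Summable.of_norm (Summable.of_nonneg_of_le (fun n => norm_nonneg _) (fun n => ?_) hsb)
    rw [norm_mul, norm_pow]
    have hp : ‖z‖ ^ (n+1) ≤ 1 := pow_le_one₀ (norm_nonneg _) hz.le
    nlinarith [norm_nonneg (b (n+1))]
  have hadiff : (∑' n : ℕ, a (n + 2) * z1 ^ (n + 2)) - (∑' n : ℕ, a (n + 2) * z2 ^ (n + 2)) =
      ∑' n : ℕ, a (n + 2) * (z1 ^ (n + 2) - z2 ^ (n + 2)) := by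
    rw [← Summable.tsum_sub (hsaz z1 hz1) (hsaz z2 hz2)]
    congr 1; ext n; ring
  have hbdiff : (∑' n : ℕ, b (n + 1) * z1 ^ (n + 1)) - (∑' n : ℕ, b (n + 1) * z2 ^ (n + 1)) =
      ∑' n : ℕ, b (n + 1) * (z1 ^ (n + 1) - z2 ^ (n + 1)) := by
    rw [← Summable.tsum_sub (hsbz z1 hz1) (hsbz z2 hz2)]
    congr 1; ext n; ring
  simp only at heq
  have heq2 : (z1 - z2) + ∑' n : ℕ, a (n + 2) * (z1 ^ (n + 2) - z2 ^ (n + 2)) =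
      (starRingEnd ℂ) ((∑' n : ℕ, b (n + 1) * z2 ^ (n + 1)) - (∑' n : ℕ, b (n + 1) * z1 ^ (n + 1))) := by
    rw [map_sub, ← hadiff]
    linear_combination heq
  have : ‖(z1 - z2) + ∑' n : ℕ, a (n + 2) * (z1 ^ (n + 2) - z2 ^ (n + 2))‖ =
      ‖∑' n : ℕ, b (n + 1) * (z1 ^ (n + 1) - z2 ^ (n + 1))‖ := by
    rw [heq2, RCLike.norm_conj, ← hbdiff, norm_sub_rev]
  linarith [hkey, this.le]
end

section
/- Distortion upper bound: Let 0 ≤ α < 1, let Φ2 > 0, and suppose f(z) = z − Σ_{n≥2} |a_n| z^n + (−1)^k Σ_{n≥1} |b_n| z̄^n satisfies the coefficient condition Σ_{n≥2} ((n−α)/(1−α)) Φ(n)|a_n| + Σ_{n≥1} ((n+α)/(1−α)) Φ(n)|b_n| ≤ 1 with Φ(n) ≥ Φ2 · (n−α)/(2−α) for n ≥ 2 (monotonicity of weights). Then for |z| = r < 1, |f(z)| ≤ (1 + |b_1|) r + (1/Φ2) · [ (1−α)/(2−α) − ((1+α)/(2−α)) |b_1| ] r². -/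
/-- Distortion upper bound for the class `B̄_H(λ,α,k)`:
`|f(z)| ≤ (1+b₁) r + (1/Φ₂)[(1−α)/(2−α) − ((1+α)/(2−α)) b₁] r²` for `|z| = r < 1`. -/
theorem stmt3 (α : ℝ) (hα0 : 0 ≤ α) (hα1 : α < 1) (Φ : ℕ → ℝ) (Φ2 : ℝ) (hΦ2 : 0 < Φ2)
    (hΦ1 : Φ 1 = 1)
    (hΦmono : ∀ n : ℕ, 2 ≤ n → Φ2 * (((n : ℝ) - α) / (2 - α)) ≤ Φ n)
    (k : ℕ) (a b : ℕ → ℝ) (ha : ∀ n, 0 ≤ a n) (hb : ∀ n, 0 ≤ b n)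
    (hsa : Summable (fun n : ℕ => (((n : ℝ) + 2 - α) / (1 - α)) * Φ (n + 2) * a (n + 2)))
    (hsb : Summable (fun n : ℕ => (((n : ℝ) + 1 + α) / (1 - α)) * Φ (n + 1) * b (n + 1)))
    (hcond : (∑' n : ℕ, (((n : ℝ) + 2 - α) / (1 - α)) * Φ (n + 2) * a (n + 2)) +
             (∑' n : ℕ, (((n : ℝ) + 1 + α) / (1 - α)) * Φ (n + 1) * b (n + 1)) ≤ 1) :
    ∀ z : ℂ, ‖z‖ < 1 →
      ‖z - (∑' n : ℕ, (a (n + 2) : ℂ) * z ^ (n + 2)) +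
          (-1 : ℂ) ^ k * (starRingEnd ℂ) (∑' n : ℕ, (b (n + 1) : ℂ) * z ^ (n + 1))‖ ≤
        (1 + b 1) * ‖z‖ +
          (1 / Φ2) * ((1 - α) / (2 - α) - ((1 + α) / (2 - α)) * b 1) * ‖z‖ ^ 2 := by
  intro z hz
  have h1α : (0:ℝ) < 1 - α := by linarith
  have h2α : (0:ℝ) < 2 - α := by linarith
  set c : ℝ := Φ2 * (2 - α) / (1 - α) with hc
  have hc0 : 0 < c := by positivity
  set fa : ℕ → ℝ := fun n : ℕ => (((n : ℝ) + 2 - α) / (1 - α)) * Φ (n + 2) * a (n + 2) with hfa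
  set fb : ℕ → ℝ := fun n : ℕ => (((n : ℝ) + 1 + α) / (1 - α)) * Φ (n + 1) * b (n + 1) with hfb
  -- termwise bounds
  have hΦpos : ∀ n : ℕ, 0 < Φ (n + 2) := by
    intro n
    have h := hΦmono (n + 2) (by omega)
    have hn : (0:ℝ) ≤ (n:ℝ) := Nat.cast_nonneg n
    have h' : Φ2 * (((n:ℝ) + 2 - α) / (2 - α)) ≤ Φ (n + 2) := by
      push_cast at h; convert h using 3
    have : 0 < Φ2 * (((n:ℝ) + 2 - α) / (2 - α)) := by
      apply mul_pos hΦ2 (div_pos (by linarith) h2α)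
    linarith
  have hΦnn : ∀ n : ℕ, 0 ≤ Φ (n + 1) := by
    intro n
    rcases n with _ | m
    · simp [hΦ1]
    · exact (hΦpos m).le
  have hfa_nonneg : ∀ n, 0 ≤ fa n := by
    intro n
    have hn : (0:ℝ) ≤ (n:ℝ) := Nat.cast_nonneg n
    exact mul_nonneg (mul_nonneg (div_nonneg (by linarith) h1α.le) (hΦpos n).le) (ha _)
  have hfb_nonneg : ∀ n, 0 ≤ fb n := by
    intro n
    have hn : (0:ℝ) ≤ (n:ℝ) := Nat.cast_nonneg n
    exact mul_nonneg (mul_nonneg (div_nonneg (by linarith) h1α.le) (hΦnn n)) (hb _)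
  have pure : ∀ t s : ℝ, 2 - α ≤ t → t ≤ s →
      Φ2 * (2 - α) / (1 - α) ≤ s / (1 - α) * (Φ2 * (t / (2 - α))) := by
    intro t s ht hts
    have ht0 : (0:ℝ) ≤ t := by linarith
    have hs0 : (0:ℝ) ≤ s := by linarith
    have e : s / (1 - α) * (Φ2 * (t / (2 - α))) = Φ2 * (s * t) / ((1 - α) * (2 - α)) := by
      field_simp
    rw [e, div_le_div_iff₀ h1α (mul_pos h1α h2α)]
    have hst : (2 - α) * (2 - α) ≤ s * t := by nlinarith
    nlinarith [mul_le_mul_of_nonneg_left hst (mul_nonneg hΦ2.le h1α.le)]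
  have hkey_a : ∀ n : ℕ, c * a (n + 2) ≤ fa n := by
    intro n
    have hn : (0:ℝ) ≤ (n:ℝ) := Nat.cast_nonneg n
    have h := hΦmono (n + 2) (by omega)
    have hΦ : Φ2 * (((n:ℝ) + 2 - α) / (2 - α)) ≤ Φ (n + 2) := by
      push_cast at h; convert h using 3
    have hcoef : c ≤ ((n:ℝ) + 2 - α) / (1 - α) * Φ (n + 2) := by
      rw [hc]
      refine (pure ((n:ℝ) + 2 - α) ((n:ℝ) + 2 - α) (by linarith) le_rfl).trans ?_
      exact mul_le_mul_of_nonneg_left hΦ (div_nonneg (by linarith) h1α.le)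
    exact mul_le_mul_of_nonneg_right hcoef (ha _)
  have hkey_b : ∀ n : ℕ, c * b (n + 2) ≤ fb (n + 1) := by
    intro n
    have hn : (0:ℝ) ≤ (n:ℝ) := Nat.cast_nonneg n
    have h := hΦmono (n + 2) (by omega)
    have hΦ : Φ2 * (((n:ℝ) + 2 - α) / (2 - α)) ≤ Φ (n + 2) := by
      push_cast at h; convert h using 3
    have hcoef : c ≤ ((n:ℝ) + 2 + α) / (1 - α) * Φ (n + 2) := by
      rw [hc]
      refine (pure ((n:ℝ) + 2 - α) ((n:ℝ) + 2 + α) (by linarith) (by linarith)).trans ?_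
      exact mul_le_mul_of_nonneg_left hΦ (div_nonneg (by linarith) h1α.le)
    have hfbe : fb (n + 1) = ((n:ℝ) + 2 + α) / (1 - α) * Φ (n + 2) * b (n + 2) := by
      simp only [hfb]
      have e1 : n + 1 + 1 = n + 2 := by omega
      rw [e1]
      push_cast
      ring
    rw [hfbe]
    exact mul_le_mul_of_nonneg_right hcoef (hb _)
  -- summability of coefficient tails
  have hsa' : Summable (fun n : ℕ => a (n + 2)) := by
    have h1 : Summable (fun n : ℕ => c * a (n + 2)) :=
      Summable.of_nonneg_of_le (fun n => mul_nonneg hc0.le (ha _)) hkey_a hsa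
    exact (summable_mul_left_iff hc0.ne').mp h1
  have hsb2 : Summable (fun n : ℕ => fb (n + 1)) := by
    simpa using (summable_nat_add_iff 1).mpr hsb
  have hsb' : Summable (fun n : ℕ => b (n + 2)) := by
    have h1 : Summable (fun n : ℕ => c * b (n + 2)) :=
      Summable.of_nonneg_of_le (fun n => mul_nonneg hc0.le (hb _)) hkey_b hsb2
    exact (summable_mul_left_iff hc0.ne').mp h1
  set Sa := ∑' n : ℕ, a (n + 2) with hSa
  set Sb := ∑' n : ℕ, b (n + 2) with hSb
  have hSa0 : 0 ≤ Sa := tsum_nonneg fun n => ha _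
  have hSb0 : 0 ≤ Sb := tsum_nonneg fun n => hb _
  -- sum inequality
  have hsum_a : c * Sa ≤ ∑' n : ℕ, fa n := by
    rw [hSa, ← tsum_mul_left]
    exact Summable.tsum_le_tsum hkey_a (hsa'.mul_left c) hsa
  have hsum_b : c * Sb ≤ ∑' n : ℕ, fb (n + 1) := by
    rw [hSb, ← tsum_mul_left]
    exact Summable.tsum_le_tsum hkey_b (hsb'.mul_left c) hsb2
  have hsplit : (∑' n : ℕ, fb n) = fb 0 + ∑' n : ℕ, fb (n + 1) := Summable.tsum_eq_zero_add hsb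
  have hfb0 : fb 0 = (1 + α) / (1 - α) * b 1 := by simp [hfb, hΦ1]
  have hmain : c * (Sa + Sb) + (1 + α) / (1 - α) * b 1 ≤ 1 := by
    have : c * Sa + c * Sb + fb 0 ≤ (∑' n : ℕ, fa n) + (∑' n : ℕ, fb n) := by
      rw [hsplit]; linarith
    rw [hfb0] at this
    calc c * (Sa + Sb) + (1 + α) / (1 - α) * b 1
        = c * Sa + c * Sb + (1 + α) / (1 - α) * b 1 := by ring
      _ ≤ (∑' n : ℕ, fa n) + (∑' n : ℕ, fb n) := this
      _ ≤ 1 := hcond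
  have hKey : Sa + Sb ≤ (1 / Φ2) * ((1 - α) / (2 - α) - ((1 + α) / (2 - α)) * b 1) := by
    rw [← mul_le_mul_iff_right₀ hc0]
    have heq : c * ((1 / Φ2) * ((1 - α) / (2 - α) - ((1 + α) / (2 - α)) * b 1))
        = 1 - (1 + α) / (1 - α) * b 1 := by
      rw [hc]; field_simp
    rw [heq]; linarith
  -- norm estimates
  set r := ‖z‖ with hr
  have hr0 : 0 ≤ r := norm_nonneg z
  have hr2 : 0 ≤ r ^ 2 := by positivity
  have hpow : ∀ n : ℕ, r ^ (n + 2) ≤ r ^ 2 :=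
    fun n => pow_le_pow_of_le_one hr0 hz.le (by omega)
  have hnorm_a : ∀ n : ℕ, ‖(a (n + 2) : ℂ) * z ^ (n + 2)‖ = a (n + 2) * r ^ (n + 2) := by
    intro n
    rw [norm_mul, norm_pow, Complex.norm_real, Real.norm_of_nonneg (ha _)]
  have hnorm_b : ∀ n : ℕ, ‖(b (n + 1) : ℂ) * z ^ (n + 1)‖ = b (n + 1) * r ^ (n + 1) := by
    intro n
    rw [norm_mul, norm_pow, Complex.norm_real, Real.norm_of_nonneg (hb _)]
  have hsum_na : Summable (fun n : ℕ => a (n + 2) * r ^ (n + 2)) := by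
    refine Summable.of_nonneg_of_le (fun n => mul_nonneg (ha _) (by positivity))
      (fun n => mul_le_of_le_one_right (ha _) (pow_le_one₀ hr0 hz.le)) hsa'
  have hsumb1 : Summable (fun n : ℕ => b (n + 1)) := by
    have he : (fun n : ℕ => b (n + 1 + 1)) = fun n : ℕ => b (n + 2) := by
      funext n; norm_num
    exact (summable_nat_add_iff (f := fun n : ℕ => b (n + 1)) 1).mp (by rw [he]; exact hsb')
  have hsum_nb : Summable (fun n : ℕ => b (n + 1) * r ^ (n + 1)) := by
    exact Summable.of_nonneg_of_le (fun n => mul_nonneg (hb _) (by positivity))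
      (fun n => mul_le_of_le_one_right (hb _) (pow_le_one₀ hr0 hz.le)) hsumb1
  have hA : ‖∑' n : ℕ, (a (n + 2) : ℂ) * z ^ (n + 2)‖ ≤ Sa * r ^ 2 := by
    calc ‖∑' n : ℕ, (a (n + 2) : ℂ) * z ^ (n + 2)‖
        ≤ ∑' n : ℕ, ‖(a (n + 2) : ℂ) * z ^ (n + 2)‖ :=
          norm_tsum_le_tsum_norm (by simpa only [hnorm_a] using hsum_na)
      _ = ∑' n : ℕ, a (n + 2) * r ^ (n + 2) := by simp only [hnorm_a]
      _ ≤ ∑' n : ℕ, a (n + 2) * r ^ 2 := by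
          refine Summable.tsum_le_tsum (fun n => ?_) hsum_na (hsa'.mul_right _)
          exact mul_le_mul_of_nonneg_left (hpow n) (ha _)
      _ = Sa * r ^ 2 := by rw [hSa, tsum_mul_right]
  have hB : ‖∑' n : ℕ, (b (n + 1) : ℂ) * z ^ (n + 1)‖ ≤ b 1 * r + Sb * r ^ 2 := by
    have hsplitb : (∑' n : ℕ, b (n + 1) * r ^ (n + 1))
        = b 1 * r + ∑' n : ℕ, b (n + 2) * r ^ (n + 2) := by
      rw [Summable.tsum_eq_zero_add hsum_nb]
      norm_num
    calc ‖∑' n : ℕ, (b (n + 1) : ℂ) * z ^ (n + 1)‖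
        ≤ ∑' n : ℕ, ‖(b (n + 1) : ℂ) * z ^ (n + 1)‖ :=
          norm_tsum_le_tsum_norm (by simpa only [hnorm_b] using hsum_nb)
      _ = ∑' n : ℕ, b (n + 1) * r ^ (n + 1) := by simp only [hnorm_b]
      _ = b 1 * r + ∑' n : ℕ, b (n + 2) * r ^ (n + 2) := hsplitb
      _ ≤ b 1 * r + Sb * r ^ 2 := by
          have h1 : Summable (fun n : ℕ => b (n + 2) * r ^ (n + 2)) := by
            simpa using (summable_nat_add_iff 1).mpr hsum_nb
          have h2 : (∑' n : ℕ, b (n + 2) * r ^ (n + 2)) ≤ Sb * r ^ 2 := by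
            calc (∑' n : ℕ, b (n + 2) * r ^ (n + 2))
                ≤ ∑' n : ℕ, b (n + 2) * r ^ 2 := by
                  refine Summable.tsum_le_tsum (fun n => ?_) h1 (hsb'.mul_right _)
                  exact mul_le_mul_of_nonneg_left (hpow n) (hb _)
              _ = Sb * r ^ 2 := by rw [hSb, tsum_mul_right]
          linarith
  have htri : ‖z - (∑' n : ℕ, (a (n + 2) : ℂ) * z ^ (n + 2)) +
      (-1 : ℂ) ^ k * (starRingEnd ℂ) (∑' n : ℕ, (b (n + 1) : ℂ) * z ^ (n + 1))‖
      ≤ r + ‖∑' n : ℕ, (a (n + 2) : ℂ) * z ^ (n + 2)‖ +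
        ‖∑' n : ℕ, (b (n + 1) : ℂ) * z ^ (n + 1)‖ := by
    calc ‖z - (∑' n : ℕ, (a (n + 2) : ℂ) * z ^ (n + 2)) +
        (-1 : ℂ) ^ k * (starRingEnd ℂ) (∑' n : ℕ, (b (n + 1) : ℂ) * z ^ (n + 1))‖
        ≤ ‖z - (∑' n : ℕ, (a (n + 2) : ℂ) * z ^ (n + 2))‖ +
          ‖(-1 : ℂ) ^ k * (starRingEnd ℂ) (∑' n : ℕ, (b (n + 1) : ℂ) * z ^ (n + 1))‖ :=
          norm_add_le _ _
      _ ≤ r + ‖∑' n : ℕ, (a (n + 2) : ℂ) * z ^ (n + 2)‖ +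
          ‖∑' n : ℕ, (b (n + 1) : ℂ) * z ^ (n + 1)‖ := by
          have h1 := norm_sub_le z (∑' n : ℕ, (a (n + 2) : ℂ) * z ^ (n + 2))
          have h2 : ‖(-1 : ℂ) ^ k * (starRingEnd ℂ)
              (∑' n : ℕ, (b (n + 1) : ℂ) * z ^ (n + 1))‖
              = ‖∑' n : ℕ, (b (n + 1) : ℂ) * z ^ (n + 1)‖ := by
            rw [norm_mul, norm_pow, norm_neg, norm_one, one_pow, one_mul,
              RingHomIsometric.norm_map]
          rw [h2]; linarith
  have hfinal : (Sa + Sb) * r ^ 2 ≤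
      (1 / Φ2) * ((1 - α) / (2 - α) - ((1 + α) / (2 - α)) * b 1) * r ^ 2 :=
    mul_le_mul_of_nonneg_right hKey hr2
  calc ‖z - (∑' n : ℕ, (a (n + 2) : ℂ) * z ^ (n + 2)) +
      (-1 : ℂ) ^ k * (starRingEnd ℂ) (∑' n : ℕ, (b (n + 1) : ℂ) * z ^ (n + 1))‖
      ≤ r + ‖∑' n : ℕ, (a (n + 2) : ℂ) * z ^ (n + 2)‖ +
        ‖∑' n : ℕ, (b (n + 1) : ℂ) * z ^ (n + 1)‖ := htri
    _ ≤ r + Sa * r ^ 2 + (b 1 * r + Sb * r ^ 2) := by linarith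
    _ ≤ (1 + b 1) * r + (1 / Φ2) * ((1 - α) / (2 - α) - ((1 + α) / (2 - α)) * b 1) * r ^ 2 := by
        nlinarith
end

section
/- Distortion lower bound: Under the same hypotheses as the upper bound, for |z| = r < 1, |f(z)| ≥ (1 − |b_1|) r − (1/Φ2) · [ (1−α)/(2−α) − ((1+α)/(2−α)) |b_1| ] r². -/
/-- Distortion lower bound for the class `B̄_H(λ,α,k)`:
`|f(z)| ≥ (1−b₁) r − (1/Φ₂)[(1−α)/(2−α) − ((1+α)/(2−α)) b₁] r²` for `|z| = r < 1`. -/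
theorem stmt4 (α : ℝ) (hα0 : 0 ≤ α) (hα1 : α < 1) (Φ : ℕ → ℝ) (Φ2 : ℝ) (hΦ2 : 0 < Φ2)
    (hΦ1 : Φ 1 = 1)
    (hΦmono : ∀ n : ℕ, 2 ≤ n → Φ2 * (((n : ℝ) - α) / (2 - α)) ≤ Φ n)
    (k : ℕ) (a b : ℕ → ℝ) (ha : ∀ n, 0 ≤ a n) (hb : ∀ n, 0 ≤ b n)
    (hsa : Summable (fun n : ℕ => (((n : ℝ) + 2 - α) / (1 - α)) * Φ (n + 2) * a (n + 2)))
    (hsb : Summable (fun n : ℕ => (((n : ℝ) + 1 + α) / (1 - α)) * Φ (n + 1) * b (n + 1)))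
    (hcond : (∑' n : ℕ, (((n : ℝ) + 2 - α) / (1 - α)) * Φ (n + 2) * a (n + 2)) +
             (∑' n : ℕ, (((n : ℝ) + 1 + α) / (1 - α)) * Φ (n + 1) * b (n + 1)) ≤ 1) :
    ∀ z : ℂ, ‖z‖ < 1 →
      ‖z - (∑' n : ℕ, (a (n + 2) : ℂ) * z ^ (n + 2)) +
          (-1 : ℂ) ^ k * (starRingEnd ℂ) (∑' n : ℕ, (b (n + 1) : ℂ) * z ^ (n + 1))‖ ≥
        (1 - b 1) * ‖z‖ -
          (1 / Φ2) * ((1 - α) / (2 - α) - ((1 + α) / (2 - α)) * b 1) * ‖z‖ ^ 2 := by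
  intro z hz
  set r := ‖z‖ with hrdef
  have hr0 : 0 ≤ r := norm_nonneg z
  have hr1 : r ≤ 1 := le_of_lt hz
  have h1α : (0:ℝ) < 1 - α := by linarith
  have h2α : (0:ℝ) < 2 - α := by linarith
  set c : ℝ := Φ2 * (2 - α) / (1 - α) with hcdef
  have hc0 : 0 < c := by positivity
  -- weight lower bounds
  have hΦpos : ∀ n : ℕ, 0 < Φ (n + 2) := by
    intro n
    have hm := hΦmono (n + 2) (by omega)
    have hcast : ((n + 2 : ℕ) : ℝ) = (n:ℝ) + 2 := by push_cast; ring
    rw [hcast] at hm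
    have : (0:ℝ) < Φ2 * (((n:ℝ) + 2 - α) / (2 - α)) := by
      have hx : (0:ℝ) ≤ (n:ℝ) := n.cast_nonneg
      have : (0:ℝ) < (n:ℝ) + 2 - α := by linarith
      positivity
    linarith
  have hwa : ∀ n : ℕ, c ≤ (((n:ℝ) + 2 - α) / (1 - α)) * Φ (n + 2) := by
    intro n
    have hx : (0:ℝ) ≤ (n:ℝ) := n.cast_nonneg
    have hm := hΦmono (n + 2) (by omega)
    have hcast : ((n + 2 : ℕ) : ℝ) = (n:ℝ) + 2 := by push_cast; ring
    rw [hcast] at hm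
    have hxp : (0:ℝ) < (n:ℝ) + 2 - α := by linarith
    have step1 : c ≤ (((n:ℝ) + 2 - α) / (1 - α)) * (Φ2 * (((n:ℝ) + 2 - α) / (2 - α))) := by
      rw [hcdef]
      rw [div_le_iff₀ h1α]
      have hR : (((n:ℝ) + 2 - α) / (1 - α)) * (Φ2 * (((n:ℝ) + 2 - α) / (2 - α))) * (1 - α)
          = Φ2 * (((n:ℝ) + 2 - α) * ((n:ℝ) + 2 - α)) / (2 - α) := by
        field_simp
      rw [hR, le_div_iff₀ h2α]
      nlinarith [mul_nonneg hΦ2.le (mul_nonneg hx hx),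
        mul_nonneg (mul_nonneg hΦ2.le hx) (by linarith : (0:ℝ) ≤ 4 - 2 * α)]
    calc c ≤ (((n:ℝ) + 2 - α) / (1 - α)) * (Φ2 * (((n:ℝ) + 2 - α) / (2 - α))) := step1
      _ ≤ (((n:ℝ) + 2 - α) / (1 - α)) * Φ (n + 2) := by
          apply mul_le_mul_of_nonneg_left hm (by positivity)
  have hwb : ∀ n : ℕ, c ≤ (((n:ℝ) + 2 + α) / (1 - α)) * Φ (n + 2) := by
    intro n
    have hx : (0:ℝ) ≤ (n:ℝ) := n.cast_nonneg
    have hm := hΦmono (n + 2) (by omega)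
    have hcast : ((n + 2 : ℕ) : ℝ) = (n:ℝ) + 2 := by push_cast; ring
    rw [hcast] at hm
    have hxp : (0:ℝ) < (n:ℝ) + 2 + α := by linarith
    have step1 : c ≤ (((n:ℝ) + 2 + α) / (1 - α)) * (Φ2 * (((n:ℝ) + 2 - α) / (2 - α))) := by
      rw [hcdef]
      rw [div_le_iff₀ h1α]
      have hR : (((n:ℝ) + 2 + α) / (1 - α)) * (Φ2 * (((n:ℝ) + 2 - α) / (2 - α))) * (1 - α)
          = Φ2 * (((n:ℝ) + 2 + α) * ((n:ℝ) + 2 - α)) / (2 - α) := by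
        field_simp
      rw [hR, le_div_iff₀ h2α]
      nlinarith [mul_nonneg hΦ2.le (mul_nonneg hx hx),
        mul_nonneg hΦ2.le hx,
        mul_nonneg (mul_nonneg hΦ2.le hα0) (by linarith : (0:ℝ) ≤ 2 - α)]
    calc c ≤ (((n:ℝ) + 2 + α) / (1 - α)) * (Φ2 * (((n:ℝ) + 2 - α) / (2 - α))) := step1
      _ ≤ (((n:ℝ) + 2 + α) / (1 - α)) * Φ (n + 2) := by
          apply mul_le_mul_of_nonneg_left hm (by positivity)
  -- summability of plain coefficients
  have hterm_a : ∀ n : ℕ, c * a (n + 2) ≤ (((n:ℝ) + 2 - α) / (1 - α)) * Φ (n + 2) * a (n + 2) := by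
    intro n
    exact mul_le_mul_of_nonneg_right (hwa n) (ha (n + 2))
  have hterm_b : ∀ n : ℕ, c * b (n + 2) ≤ (((n:ℝ) + 2 + α) / (1 - α)) * Φ (n + 2) * b (n + 2) := by
    intro n
    exact mul_le_mul_of_nonneg_right (hwb n) (hb (n + 2))
  have hsb' : Summable (fun n : ℕ => (((n:ℝ) + 2 + α) / (1 - α)) * Φ (n + 2) * b (n + 2)) := by
    have h := (summable_nat_add_iff
      (f := fun n : ℕ => (((n : ℝ) + 1 + α) / (1 - α)) * Φ (n + 1) * b (n + 1)) 1).mpr hsb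
    refine h.congr fun n => ?_
    push_cast
    ring_nf
  have hsca : Summable (fun n : ℕ => c * a (n + 2)) :=
    Summable.of_nonneg_of_le (fun n => mul_nonneg hc0.le (ha _)) hterm_a hsa
  have hscb : Summable (fun n : ℕ => c * b (n + 2)) :=
    Summable.of_nonneg_of_le (fun n => mul_nonneg hc0.le (hb _)) hterm_b hsb'
  have hsa2 : Summable (fun n : ℕ => a (n + 2)) := by
    have := hsca.mul_left (1 / c)
    refine this.congr fun n => ?_
    field_simp
  have hsb2 : Summable (fun n : ℕ => b (n + 2)) := by
    have := hscb.mul_left (1 / c)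
    refine this.congr fun n => ?_
    field_simp
  set A := ∑' n : ℕ, a (n + 2) with hAdef
  set B := ∑' n : ℕ, b (n + 2) with hBdef
  have hA0 : 0 ≤ A := tsum_nonneg fun n => ha _
  have hB0 : 0 ≤ B := tsum_nonneg fun n => hb _
  -- key coefficient bound
  have hkeyA : c * A ≤ ∑' n : ℕ, (((n:ℝ) + 2 - α) / (1 - α)) * Φ (n + 2) * a (n + 2) := by
    rw [hAdef, ← tsum_mul_left]
    exact Summable.tsum_le_tsum hterm_a hsca hsa
  have hkeyB : c * B ≤ ∑' n : ℕ, (((n:ℝ) + 2 + α) / (1 - α)) * Φ (n + 2) * b (n + 2) := by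
    rw [hBdef, ← tsum_mul_left]
    exact Summable.tsum_le_tsum hterm_b hscb hsb'
  have hsplit : (∑' n : ℕ, (((n : ℝ) + 1 + α) / (1 - α)) * Φ (n + 1) * b (n + 1))
      = (1 + α) / (1 - α) * b 1
        + ∑' n : ℕ, (((n:ℝ) + 2 + α) / (1 - α)) * Φ (n + 2) * b (n + 2) := by
    rw [Summable.tsum_eq_zero_add hsb]
    congr 1
    · push_cast
      rw [hΦ1]; ring
    · exact tsum_congr fun n => by push_cast; ring_nf
  have hkey : c * (A + B) ≤ 1 - (1 + α) / (1 - α) * b 1 := by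
    rw [hsplit] at hcond
    have hexp : c * (A + B) = c * A + c * B := by ring
    linarith
  -- norm estimates for the two series
  have hnorm_a : ∀ n : ℕ, ‖(a (n + 2) : ℂ) * z ^ (n + 2)‖ = a (n + 2) * r ^ (n + 2) := by
    intro n
    rw [norm_mul, norm_pow, Complex.norm_real, Real.norm_of_nonneg (ha _)]
  have hnorm_b : ∀ n : ℕ, ‖(b (n + 1) : ℂ) * z ^ (n + 1)‖ = b (n + 1) * r ^ (n + 1) := by
    intro n
    rw [norm_mul, norm_pow, Complex.norm_real, Real.norm_of_nonneg (hb _)]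
  have hpow : ∀ n : ℕ, r ^ (n + 2) ≤ r ^ 2 := fun n =>
    pow_le_pow_of_le_one hr0 hr1 (by omega)
  have hsna : Summable (fun n : ℕ => a (n + 2) * r ^ (n + 2)) := by
    refine Summable.of_nonneg_of_le (fun n => mul_nonneg (ha _) (pow_nonneg hr0 _)) (fun n => ?_) hsa2
    calc a (n + 2) * r ^ (n + 2) ≤ a (n + 2) * 1 := by
          apply mul_le_mul_of_nonneg_left _ (ha _)
          exact pow_le_one₀ hr0 hr1
      _ = a (n + 2) := mul_one _
  have hsnb2 : Summable (fun n : ℕ => b (n + 2) * r ^ (n + 2)) := by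
    refine Summable.of_nonneg_of_le (fun n => mul_nonneg (hb _) (pow_nonneg hr0 _)) (fun n => ?_) hsb2
    calc b (n + 2) * r ^ (n + 2) ≤ b (n + 2) * 1 := by
          apply mul_le_mul_of_nonneg_left _ (hb _)
          exact pow_le_one₀ hr0 hr1
      _ = b (n + 2) := mul_one _
  have hsnb : Summable (fun n : ℕ => b (n + 1) * r ^ (n + 1)) := by
    rw [← summable_nat_add_iff 1]
    exact hsnb2
  have hSa : ‖∑' n : ℕ, (a (n + 2) : ℂ) * z ^ (n + 2)‖ ≤ A * r ^ 2 := by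
    calc ‖∑' n : ℕ, (a (n + 2) : ℂ) * z ^ (n + 2)‖
        ≤ ∑' n : ℕ, ‖(a (n + 2) : ℂ) * z ^ (n + 2)‖ := by
          apply norm_tsum_le_tsum_norm
          exact hsna.congr fun n => (hnorm_a n).symm
      _ = ∑' n : ℕ, a (n + 2) * r ^ (n + 2) := tsum_congr hnorm_a
      _ ≤ ∑' n : ℕ, a (n + 2) * r ^ 2 := by
          refine Summable.tsum_le_tsum (fun n => ?_) hsna (hsa2.mul_right _)
          exact mul_le_mul_of_nonneg_left (hpow n) (ha _)
      _ = A * r ^ 2 := by rw [hAdef, tsum_mul_right]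
  have h2tail : (∑' n : ℕ, b (n + 2) * r ^ (n + 2)) ≤ B * r ^ 2 := by
    calc (∑' n : ℕ, b (n + 2) * r ^ (n + 2)) ≤ ∑' n : ℕ, b (n + 2) * r ^ 2 := by
          refine Summable.tsum_le_tsum (fun n => ?_) hsnb2 (hsb2.mul_right _)
          exact mul_le_mul_of_nonneg_left (hpow n) (hb _)
      _ = B * r ^ 2 := by rw [hBdef, tsum_mul_right]
  have hSb : ‖∑' n : ℕ, (b (n + 1) : ℂ) * z ^ (n + 1)‖ ≤ b 1 * r + B * r ^ 2 := by
    calc ‖∑' n : ℕ, (b (n + 1) : ℂ) * z ^ (n + 1)‖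
        ≤ ∑' n : ℕ, ‖(b (n + 1) : ℂ) * z ^ (n + 1)‖ := by
          apply norm_tsum_le_tsum_norm
          exact hsnb.congr fun n => (hnorm_b n).symm
      _ = ∑' n : ℕ, b (n + 1) * r ^ (n + 1) := tsum_congr hnorm_b
      _ = b 1 * r ^ 1 + ∑' n : ℕ, b (n + 2) * r ^ (n + 2) := by
          rw [Summable.tsum_eq_zero_add hsnb]
      _ ≤ b 1 * r + B * r ^ 2 := by
          rw [pow_one]
          linarith [h2tail]
  -- triangle inequality
  set Sa := ∑' n : ℕ, (a (n + 2) : ℂ) * z ^ (n + 2) with hSadef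
  set Sb := ∑' n : ℕ, (b (n + 1) : ℂ) * z ^ (n + 1) with hSbdef
  set w := (-1 : ℂ) ^ k * (starRingEnd ℂ) Sb with hwdef
  have hwn : ‖w‖ = ‖Sb‖ := by
    rw [hwdef, norm_mul, norm_pow, norm_neg, norm_one, one_pow, one_mul]
    exact RCLike.norm_conj Sb
  have htri1 : ‖z - Sa‖ - ‖w‖ ≤ ‖z - Sa + w‖ := by
    have h := norm_sub_le (z - Sa + w) w
    rw [add_sub_cancel_right] at h
    linarith
  have htri2 : r - ‖Sa‖ ≤ ‖z - Sa‖ := by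
    have h := norm_sub_norm_le z Sa
    linarith
  have hmain : r - ‖Sa‖ - ‖Sb‖ ≤ ‖z - Sa + w‖ := by
    rw [← hwn]; linarith
  -- final computation
  have hABle : A + B ≤ (1 / Φ2) * ((1 - α) / (2 - α) - (1 + α) / (2 - α) * b 1) := by
    rw [← le_div_iff₀' hc0] at hkey
    have heq : (1 - (1 + α) / (1 - α) * b 1) / c
        = (1 / Φ2) * ((1 - α) / (2 - α) - (1 + α) / (2 - α) * b 1) := by
      rw [hcdef]
      field_simp
      try ring
    rw [heq] at hkey
    exact hkey
  have hr2 : (0:ℝ) ≤ r ^ 2 := by positivity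
  have hABr : (A + B) * r ^ 2 ≤ (1 / Φ2) * ((1 - α) / (2 - α) - (1 + α) / (2 - α) * b 1) * r ^ 2 :=
    mul_le_mul_of_nonneg_right hABle hr2
  have hexp2 : A * r ^ 2 + B * r ^ 2 = (A + B) * r ^ 2 := by ring
  have : (1 - b 1) * r - (1 / Φ2) * ((1 - α) / (2 - α) - (1 + α) / (2 - α) * b 1) * r ^ 2
      ≤ ‖z - Sa + w‖ := by linarith
  exact this
end

section
/- Convolution closure: Let 0 ≤ β ≤ α < 1 and Φ : ℕ → ℝ, Φ(n) > 0. Suppose (a_n, b_n) satisfy Σ_{n≥2} ((n−α)/(1−α)) Φ(n)|a_n| + Σ_{n≥1} ((n+α)/(1−α)) Φ(n)|b_n| ≤ 1 and (c_n, d_n) satisfy the analogous condition with β in place of α, together with |c_n| ≤ 1 and |d_n| ≤ 1 for all n. Then the convolution coefficients satisfy Σ_{n≥2} ((n−α)/(1−α)) Φ(n)|a_n c_n| + Σ_{n≥1} ((n+α)/(1−α)) Φ(n)|b_n d_n| ≤ 1, i.e. the Hadamard product f∗g belongs to the class with parameter α (and hence with parameter β). -/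
/-- Convolution (Hadamard product) closure: if `f ∈ B̄_H(λ,α,k)` and `g ∈ B̄_H(λ,β,k)`
with `0 ≤ β ≤ α < 1` and `|c_n| ≤ 1`, `|d_n| ≤ 1`, then `f∗g ∈ B̄_H(λ,α,k)`. -/
theorem stmt5 (α β : ℝ) (hβ0 : 0 ≤ β) (hβα : β ≤ α) (hα1 : α < 1)
    (Φ : ℕ → ℝ) (hΦ : ∀ n, 0 < Φ n)
    (a b c d : ℕ → ℂ)
    (hsa : Summable (fun n : ℕ => (((n : ℝ) + 2 - α) / (1 - α)) * Φ (n + 2) * ‖a (n + 2)‖))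
    (hsb : Summable (fun n : ℕ => (((n : ℝ) + 1 + α) / (1 - α)) * Φ (n + 1) * ‖b (n + 1)‖))
    (hf : (∑' n : ℕ, (((n : ℝ) + 2 - α) / (1 - α)) * Φ (n + 2) * ‖a (n + 2)‖) +
          (∑' n : ℕ, (((n : ℝ) + 1 + α) / (1 - α)) * Φ (n + 1) * ‖b (n + 1)‖) ≤ 1)
    (hg : (∑' n : ℕ, (((n : ℝ) + 2 - β) / (1 - β)) * Φ (n + 2) * ‖c (n + 2)‖) +
          (∑' n : ℕ, (((n : ℝ) + 1 + β) / (1 - β)) * Φ (n + 1) * ‖d (n + 1)‖) ≤ 1)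
    (hc : ∀ n, ‖c n‖ ≤ 1) (hd : ∀ n, ‖d n‖ ≤ 1) :
    (∑' n : ℕ, (((n : ℝ) + 2 - α) / (1 - α)) * Φ (n + 2) * ‖a (n + 2) * c (n + 2)‖) +
      (∑' n : ℕ, (((n : ℝ) + 1 + α) / (1 - α)) * Φ (n + 1) * ‖b (n + 1) * d (n + 1)‖) ≤ 1 := by
  have h1α : (0:ℝ) < 1 - α := by linarith
  have h0α : 0 ≤ α := le_trans hβ0 hβα
  have key1 : ∀ n : ℕ, (((n : ℝ) + 2 - α) / (1 - α)) * Φ (n + 2) * ‖a (n + 2) * c (n + 2)‖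
      ≤ (((n : ℝ) + 2 - α) / (1 - α)) * Φ (n + 2) * ‖a (n + 2)‖ := by
    intro n
    have hcoef : 0 ≤ (((n : ℝ) + 2 - α) / (1 - α)) * Φ (n + 2) := by
      have hn : (0:ℝ) ≤ n := Nat.cast_nonneg n
      exact mul_nonneg (div_nonneg (by linarith) h1α.le) (hΦ _).le
    have : ‖a (n + 2) * c (n + 2)‖ ≤ ‖a (n + 2)‖ := by
      rw [norm_mul]
      calc ‖a (n+2)‖ * ‖c (n+2)‖ ≤ ‖a (n+2)‖ * 1 :=
        mul_le_mul_of_nonneg_left (hc _) (norm_nonneg _)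
      _ = ‖a (n+2)‖ := mul_one _
    exact mul_le_mul_of_nonneg_left this hcoef
  have key2 : ∀ n : ℕ, (((n : ℝ) + 1 + α) / (1 - α)) * Φ (n + 1) * ‖b (n + 1) * d (n + 1)‖
      ≤ (((n : ℝ) + 1 + α) / (1 - α)) * Φ (n + 1) * ‖b (n + 1)‖ := by
    intro n
    have hcoef : 0 ≤ (((n : ℝ) + 1 + α) / (1 - α)) * Φ (n + 1) := by
      have hn : (0:ℝ) ≤ n := Nat.cast_nonneg n
      exact mul_nonneg (div_nonneg (by linarith) h1α.le) (hΦ _).le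
    have : ‖b (n + 1) * d (n + 1)‖ ≤ ‖b (n + 1)‖ := by
      rw [norm_mul]
      calc ‖b (n+1)‖ * ‖d (n+1)‖ ≤ ‖b (n+1)‖ * 1 :=
        mul_le_mul_of_nonneg_left (hd _) (norm_nonneg _)
      _ = ‖b (n+1)‖ := mul_one _
    exact mul_le_mul_of_nonneg_left this hcoef
  have nn1 : ∀ n : ℕ, 0 ≤ (((n : ℝ) + 2 - α) / (1 - α)) * Φ (n + 2) * ‖a (n + 2) * c (n + 2)‖ := by
    intro n
    have hn : (0:ℝ) ≤ n := Nat.cast_nonneg n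
    exact mul_nonneg (mul_nonneg (div_nonneg (by linarith) h1α.le) (hΦ _).le) (norm_nonneg _)
  have nn2 : ∀ n : ℕ, 0 ≤ (((n : ℝ) + 1 + α) / (1 - α)) * Φ (n + 1) * ‖b (n + 1) * d (n + 1)‖ := by
    intro n
    have hn : (0:ℝ) ≤ n := Nat.cast_nonneg n
    exact mul_nonneg (mul_nonneg (div_nonneg (by linarith) h1α.le) (hΦ _).le) (norm_nonneg _)
  have s1 := Summable.of_nonneg_of_le nn1 key1 hsa
  have s2 := Summable.of_nonneg_of_le nn2 key2 hsb
  have t1 := Summable.tsum_le_tsum key1 s1 hsa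
  have t2 := Summable.tsum_le_tsum key2 s2 hsb
  linarith
end

section
/- Extreme-point representation (necessity): Let 0 ≤ α < 1, Φ(n) > 0, and suppose a_n ≥ 0 (n ≥ 2), b_n ≥ 0 (n ≥ 1) satisfy Σ_{n≥2} ((n−α)/(1−α)) Φ(n) a_n + Σ_{n≥1} ((n+α)/(1−α)) Φ(n) b_n ≤ 1. Define T_n = ((n−α)/(1−α)) Φ(n) a_n for n ≥ 2, S_n = ((n+α)/(1−α)) Φ(n) b_n for n ≥ 1, and T_1 = 1 − Σ_{n≥2} T_n − Σ_{n≥1} S_n. Then T_n, S_n ≥ 0, T_1 ≥ 0, Σ_{n≥1}(T_n + S_n) = 1, and a_n = ((1−α)/((n−α)Φ(n))) T_n, b_n = ((1−α)/((n+α)Φ(n))) S_n; consequently f = Σ_{n≥1}(T_n h_n + S_n g_n). -/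
/-- Extreme-point representation (necessity): from the class coefficient inequality, setting
`T_n = ((n−α)/(1−α)) Φ(n) a_n` (n ≥ 2), `S_n = ((n+α)/(1−α)) Φ(n) b_n` (n ≥ 1) and
`T_1 = 1 − Σ_{n≥2} T_n − Σ_{n≥1} S_n`, one has `T_n, S_n ≥ 0`, `T_1 ≥ 0`,
`Σ_{n≥1} (T_n + S_n) = 1`, and the coefficients are recovered from `T_n, S_n`. -/
theorem stmt9 (α : ℝ) (hα0 : 0 ≤ α) (hα1 : α < 1)
    (Φ : ℕ → ℝ) (hΦ : ∀ n, 0 < Φ n)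
    (a b : ℕ → ℝ) (ha : ∀ n : ℕ, 2 ≤ n → 0 ≤ a n) (hb : ∀ n : ℕ, 1 ≤ n → 0 ≤ b n)
    (hsa : Summable (fun n : ℕ => (((n : ℝ) + 2 - α) / (1 - α)) * Φ (n + 2) * a (n + 2)))
    (hsb : Summable (fun n : ℕ => (((n : ℝ) + 1 + α) / (1 - α)) * Φ (n + 1) * b (n + 1)))
    (hcond : (∑' n : ℕ, (((n : ℝ) + 2 - α) / (1 - α)) * Φ (n + 2) * a (n + 2)) +
             (∑' n : ℕ, (((n : ℝ) + 1 + α) / (1 - α)) * Φ (n + 1) * b (n + 1)) ≤ 1)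
    (T S : ℕ → ℝ)
    (hTdef : ∀ n : ℕ, 2 ≤ n → T n = (((n : ℝ) - α) / (1 - α)) * Φ n * a n)
    (hSdef : ∀ n : ℕ, 1 ≤ n → S n = (((n : ℝ) + α) / (1 - α)) * Φ n * b n)
    (hT1 : T 1 = 1 - (∑' n : ℕ, T (n + 2)) - (∑' n : ℕ, S (n + 1))) :
    (∀ n : ℕ, 2 ≤ n → 0 ≤ T n) ∧ (∀ n : ℕ, 1 ≤ n → 0 ≤ S n) ∧ 0 ≤ T 1 ∧
    (T 1 + (∑' n : ℕ, T (n + 2))) + (∑' n : ℕ, S (n + 1)) = 1 ∧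
    (∀ n : ℕ, 2 ≤ n → a n = ((1 - α) / (((n : ℝ) - α) * Φ n)) * T n) ∧
    (∀ n : ℕ, 1 ≤ n → b n = ((1 - α) / (((n : ℝ) + α) * Φ n)) * S n) := by
  have h1α : (0:ℝ) < 1 - α := by linarith
  have hTnn : ∀ n : ℕ, 2 ≤ n → 0 ≤ T n := by
    intro n hn
    rw [hTdef n hn]
    have hnα : (0:ℝ) ≤ ((n:ℝ) - α) / (1 - α) := by
      apply div_nonneg _ h1α.le
      have : (2:ℝ) ≤ (n:ℝ) := by exact_mod_cast hn
      linarith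
    exact mul_nonneg (mul_nonneg hnα (hΦ n).le) (ha n hn)
  have hSnn : ∀ n : ℕ, 1 ≤ n → 0 ≤ S n := by
    intro n hn
    rw [hSdef n hn]
    have hnα : (0:ℝ) ≤ ((n:ℝ) + α) / (1 - α) := by
      apply div_nonneg _ h1α.le
      have : (1:ℝ) ≤ (n:ℝ) := by exact_mod_cast hn
      linarith
    exact mul_nonneg (mul_nonneg hnα (hΦ n).le) (hb n hn)
  have hTeq : (∑' n : ℕ, T (n + 2)) = ∑' n : ℕ, (((n : ℝ) + 2 - α) / (1 - α)) * Φ (n + 2) * a (n + 2) := by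
    apply tsum_congr
    intro n
    rw [hTdef (n + 2) (by omega)]
    push_cast
    ring
  have hSeq : (∑' n : ℕ, S (n + 1)) = ∑' n : ℕ, (((n : ℝ) + 1 + α) / (1 - α)) * Φ (n + 1) * b (n + 1) := by
    apply tsum_congr
    intro n
    rw [hSdef (n + 1) (by omega)]
    push_cast
    ring
  have hT1nn : 0 ≤ T 1 := by
    rw [hT1, hTeq, hSeq]; linarith
  refine ⟨hTnn, hSnn, hT1nn, by rw [hT1]; ring, ?_, ?_⟩
  · intro n hn
    rw [hTdef n hn]
    have h2 : (2:ℝ) ≤ (n:ℝ) := by exact_mod_cast hn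
    have hne1 : ((n:ℝ) - α) ≠ 0 := by linarith
    have hne2 : Φ n ≠ 0 := (hΦ n).ne'
    have hne3 : (1 - α) ≠ 0 := h1α.ne'
    field_simp
  · intro n hn
    rw [hSdef n hn]
    have h2 : (1:ℝ) ≤ (n:ℝ) := by exact_mod_cast hn
    have hne1 : ((n:ℝ) + α) ≠ 0 := by positivity
    have hne2 : Φ n ≠ 0 := (hΦ n).ne'
    have hne3 : (1 - α) ≠ 0 := h1α.ne'
    field_simp
end

section
/- Tail coefficient bound: if 0 ≤ α < 1, Φ(n) ≥ Φ2 · (n−α)/(2−α) for all n ≥ 2 with Φ2 > 0, and Σ_{n≥2} ((n−α)/(1−α)) Φ(n)|a_n| + Σ_{n≥1} ((n+α)/(1−α)) Φ(n)|b_n| ≤ 1, then Σ_{n≥2} (|a_n| + |b_n|) ≤ (1/Φ2) · [ (1−α)/(2−α) − ((1+α)/(2−α)) |b_1| ]. -/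
set_option maxHeartbeats 1000000

/-- Key pointwise coefficient inequality. -/
lemma key_coeff (α Φ2 s t Φv : ℝ) (h1 : 0 < 1 - α) (h2 : 0 < 2 - α) (hΦ2 : 0 < Φ2)
    (hs : 0 ≤ s) (hst : (2 - α) ^ 2 ≤ s * t) (hΦ : Φ2 * (t / (2 - α)) ≤ Φv) :
    Φ2 * ((2 - α) / (1 - α)) ≤ (s / (1 - α)) * Φv := by
  have hΦ' : Φ2 * t ≤ Φv * (2 - α) := by
    rw [← mul_div_assoc] at hΦ
    exact (div_le_iff₀ h2).mp hΦ
  rw [mul_div_assoc', div_mul_eq_mul_div, div_le_div_iff₀ h1 h1]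
  nlinarith [mul_le_mul_of_nonneg_left hΦ' hs, mul_le_mul_of_nonneg_left hst hΦ2.le,
    mul_pos hΦ2 h2, h1, h2]

/-- Tail coefficient bound used in the distortion theorem:
`Σ_{n≥2} (|a_n| + |b_n|) ≤ (1/Φ₂)[(1−α)/(2−α) − ((1+α)/(2−α)) |b₁|]`. -/
theorem stmt11 (α : ℝ) (hα0 : 0 ≤ α) (hα1 : α < 1)
    (Φ : ℕ → ℝ) (Φ2 : ℝ) (hΦ2 : 0 < Φ2) (hΦ1 : Φ 1 = 1)
    (hΦmono : ∀ n : ℕ, 2 ≤ n → Φ2 * (((n : ℝ) - α) / (2 - α)) ≤ Φ n)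
    (a b : ℕ → ℂ)
    (hsa : Summable (fun n : ℕ => (((n : ℝ) + 2 - α) / (1 - α)) * Φ (n + 2) * ‖a (n + 2)‖))
    (hsb : Summable (fun n : ℕ => (((n : ℝ) + 1 + α) / (1 - α)) * Φ (n + 1) * ‖b (n + 1)‖))
    (hcond : (∑' n : ℕ, (((n : ℝ) + 2 - α) / (1 - α)) * Φ (n + 2) * ‖a (n + 2)‖) +
             (∑' n : ℕ, (((n : ℝ) + 1 + α) / (1 - α)) * Φ (n + 1) * ‖b (n + 1)‖) ≤ 1) :
    (∑' n : ℕ, (‖a (n + 2)‖ + ‖b (n + 2)‖)) ≤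
      (1 / Φ2) * ((1 - α) / (2 - α) - ((1 + α) / (2 - α)) * ‖b 1‖) := by
  have h1 : (0:ℝ) < 1 - α := by linarith
  have h2 : (0:ℝ) < 2 - α := by linarith
  set c : ℝ := Φ2 * ((2 - α) / (1 - α)) with hc_def
  have hc : 0 < c := by positivity
  -- pointwise bounds
  have hkeyA : ∀ n : ℕ, c * ‖a (n + 2)‖ ≤
      (((n : ℝ) + 2 - α) / (1 - α)) * Φ (n + 2) * ‖a (n + 2)‖ := by
    intro n
    have hΦn := hΦmono (n + 2) (by omega)
    push_cast at hΦn
    have hcoef : c ≤ (((n : ℝ) + 2 - α) / (1 - α)) * Φ (n + 2) := by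
      exact key_coeff α Φ2 ((n:ℝ)+2-α) ((n:ℝ)+2-α) (Φ (n+2)) h1 h2 hΦ2
        (by nlinarith [(Nat.cast_nonneg n : (0:ℝ) ≤ (n:ℝ))])
        (by nlinarith [(Nat.cast_nonneg n : (0:ℝ) ≤ (n:ℝ))])
        (by first | linarith [hΦn] | (convert hΦn using 3; ring))
    calc c * ‖a (n + 2)‖ ≤ ((((n : ℝ) + 2 - α) / (1 - α)) * Φ (n + 2)) * ‖a (n + 2)‖ :=
          mul_le_mul_of_nonneg_right hcoef (norm_nonneg _)
      _ = _ := by ring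
  have hkeyB : ∀ n : ℕ, c * ‖b (n + 2)‖ ≤
      (((n + 1 : ℕ) : ℝ) + 1 + α) / (1 - α) * Φ ((n + 1) + 1) * ‖b ((n + 1) + 1)‖ := by
    intro n
    have hΦn := hΦmono (n + 2) (by omega)
    push_cast at hΦn ⊢
    have hcoef : c ≤ (((n : ℝ) + 2 + α) / (1 - α)) * Φ (n + 2) := by
      exact key_coeff α Φ2 ((n:ℝ)+2+α) ((n:ℝ)+2-α) (Φ (n+2)) h1 h2 hΦ2
        (by nlinarith [(Nat.cast_nonneg n : (0:ℝ) ≤ (n:ℝ))])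
        (by nlinarith [(Nat.cast_nonneg n : (0:ℝ) ≤ (n:ℝ))])
        (by first | linarith [hΦn] | (convert hΦn using 3; ring))
    calc c * ‖b (n + 2)‖ ≤ ((((n : ℝ) + 2 + α) / (1 - α)) * Φ (n + 2)) * ‖b (n + 2)‖ :=
          mul_le_mul_of_nonneg_right hcoef (norm_nonneg _)
      _ = _ := by ring_nf
  -- summability of the plain norm series
  have hsb' : Summable (fun n : ℕ =>
      (((n + 1 : ℕ) : ℝ) + 1 + α) / (1 - α) * Φ ((n + 1) + 1) * ‖b ((n + 1) + 1)‖) :=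
    (summable_nat_add_iff 1).mpr hsb
  have hsca : Summable (fun n : ℕ => c * ‖a (n + 2)‖) :=
    Summable.of_nonneg_of_le (fun n => by positivity) hkeyA hsa
  have hscb : Summable (fun n : ℕ => c * ‖b (n + 2)‖) :=
    Summable.of_nonneg_of_le (fun n => by positivity) hkeyB hsb'
  have ha' : Summable (fun n : ℕ => ‖a (n + 2)‖) :=
    (summable_mul_left_iff hc.ne').mp hsca
  have hb' : Summable (fun n : ℕ => ‖b (n + 2)‖) :=
    (summable_mul_left_iff hc.ne').mp hscb
  -- tsum estimates
  have hta : (∑' n : ℕ, c * ‖a (n + 2)‖) ≤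
      ∑' n : ℕ, (((n : ℝ) + 2 - α) / (1 - α)) * Φ (n + 2) * ‖a (n + 2)‖ :=
    Summable.tsum_le_tsum hkeyA hsca hsa
  have htb : (∑' n : ℕ, c * ‖b (n + 2)‖) ≤
      ∑' n : ℕ, (((n + 1 : ℕ) : ℝ) + 1 + α) / (1 - α) * Φ ((n + 1) + 1) * ‖b ((n + 1) + 1)‖ :=
    Summable.tsum_le_tsum hkeyB hscb hsb'
  have hsplit : (∑' n : ℕ, (((n : ℝ) + 1 + α) / (1 - α)) * Φ (n + 1) * ‖b (n + 1)‖) =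
      (((0 : ℕ) : ℝ) + 1 + α) / (1 - α) * Φ (0 + 1) * ‖b (0 + 1)‖ +
      ∑' n : ℕ, (((n + 1 : ℕ) : ℝ) + 1 + α) / (1 - α) * Φ ((n + 1) + 1) * ‖b ((n + 1) + 1)‖ :=
    Summable.tsum_eq_zero_add hsb
  have hB0 : (((0 : ℕ) : ℝ) + 1 + α) / (1 - α) * Φ (0 + 1) * ‖b (0 + 1)‖ =
      (1 + α) / (1 - α) * ‖b 1‖ := by
    simp [hΦ1]
  -- combine
  have hmain : c * (∑' n : ℕ, (‖a (n + 2)‖ + ‖b (n + 2)‖)) ≤ 1 - (1 + α) / (1 - α) * ‖b 1‖ := by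
    have hsum : (∑' n : ℕ, (‖a (n + 2)‖ + ‖b (n + 2)‖)) =
        (∑' n : ℕ, ‖a (n + 2)‖) + ∑' n : ℕ, ‖b (n + 2)‖ := Summable.tsum_add ha' hb'
    rw [hsum, mul_add, ← tsum_mul_left, ← tsum_mul_left]
    have := hcond
    rw [hsplit, hB0] at this
    linarith [hta, htb]
  have hfinal : (1 / c) * (1 - (1 + α) / (1 - α) * ‖b 1‖) =
      (1 / Φ2) * ((1 - α) / (2 - α) - ((1 + α) / (2 - α)) * ‖b 1‖) := by
    rw [hc_def]
    field_simp
  rw [← hfinal]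
  calc (∑' n : ℕ, (‖a (n + 2)‖ + ‖b (n + 2)‖)) ≤ (1 - (1 + α) / (1 - α) * ‖b 1‖) / c :=
        (le_div_iff₀' hc).mpr hmain
    _ = (1 / c) * (1 - (1 + α) / (1 - α) * ‖b 1‖) := by ring
end
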